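/- Let F be a field and h ∈ F[x]. Then the Lie commutator ideal satisfies [A_h, A_h] ⊆ h·A_h, where [A_h, A_h] is the F-span of all commutators ab − ba for a, b ∈ A_h. -/
import Mathlib


open Polynomial FreeAlgebra

/-- The defining relation of `A_h`: `y * x = x * y + h(x)`. -/
inductive ahRel (F : Type) [Field F] (h : F[X]) :
    FreeAlgebra F (Fin 2) → FreeAlgebra F (Fin 2) → Prop
  | rel : ahRel F h (ι F 1 * ι F 0) (ι F 0 * ι F 1 + aeval (ι F 0) h)

/-- The algebra `A_h` generated by `x, y` with `yx - xy = h(x)`. -/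
noncomputable abbrev AW (F : Type) [Field F] (h : F[X]) := RingQuot (ahRel F h)

/-- The generator `x` of `A_h`. -/
noncomputable def aX (F : Type) [Field F] (h : F[X]) : AW F h :=
  RingQuot.mkAlgHom F (ahRel F h) (ι F 0)

/-- The generator `y` of `A_h`. -/
noncomputable def aY (F : Type) [Field F] (h : F[X]) : AW F h :=
  RingQuot.mkAlgHom F (ahRel F h) (ι F 1)

namespace Stmt9Aux

variable (F : Type) [Field F] (h : F[X])

lemma mk_aeval (p : F[X]) :
    RingQuot.mkAlgHom F (ahRel F h) (aeval (ι F 0) p) = aeval (aX F h) p :=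
  (Polynomial.aeval_algHom_apply (RingQuot.mkAlgHom F (ahRel F h)) (ι F 0) p).symm

lemma rel : aY F h * aX F h = aX F h * aY F h + aeval (aX F h) h := by
  have := RingQuot.mkAlgHom_rel F (ahRel.rel (F := F) (h := h))
  simpa [aX, aY, map_mul, map_add, mk_aeval] using this

lemma aeval_comm (p q : F[X]) :
    aeval (aX F h) p * aeval (aX F h) q = aeval (aX F h) q * aeval (aX F h) p := by
  rw [← map_mul, ← map_mul, mul_comm]

lemma aX_comm (p : F[X]) :
    aX F h * aeval (aX F h) p = aeval (aX F h) p * aX F h := by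
  simpa using aeval_comm F h X p

lemma yA (p : F[X]) :
    ∃ q : F[X], aY F h * aeval (aX F h) p =
      aeval (aX F h) p * aY F h + aeval (aX F h) h * aeval (aX F h) q := by
  induction p using Polynomial.induction_on with
  | C a =>
      refine ⟨0, ?_⟩
      simp [Algebra.commutes]
  | add p q hp hq =>
      obtain ⟨qp, hqp⟩ := hp
      obtain ⟨qq, hqq⟩ := hq
      refine ⟨qp + qq, ?_⟩
      simp only [map_add, mul_add, add_mul, hqp, hqq]
      abel
  | monomial n a ih =>
      obtain ⟨q, hq⟩ := ih
      refine ⟨C a * X ^ n + q * X, ?_⟩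
      have e1 : aeval (aX F h) (C a * X ^ (n + 1)) =
          aeval (aX F h) (C a * X ^ n) * aX F h := by
        rw [pow_succ, ← mul_assoc, map_mul, aeval_X]
      have e2 : aeval (aX F h) q * aX F h = aeval (aX F h) (q * X) := by
        rw [map_mul, aeval_X]
      have e3 : aeval (aX F h) (C a * X ^ n) * aeval (aX F h) h =
          aeval (aX F h) h * aeval (aX F h) (C a * X ^ n) := aeval_comm F h _ _
      calc aY F h * aeval (aX F h) (C a * X ^ (n + 1))
          = aeval (aX F h) (C a * X ^ n) * (aY F h * aX F h) +
            aeval (aX F h) h * (aeval (aX F h) q * aX F h) := by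
            rw [e1, ← mul_assoc, hq]; noncomm_ring
        _ = aeval (aX F h) (C a * X ^ n) * aX F h * aY F h +
            (aeval (aX F h) (C a * X ^ n) * aeval (aX F h) h +
              aeval (aX F h) h * aeval (aX F h) (q * X)) := by
            rw [rel, e2]; noncomm_ring
        _ = aeval (aX F h) (C a * X ^ (n + 1)) * aY F h +
            aeval (aX F h) h * aeval (aX F h) (C a * X ^ n + q * X) := by
            rw [← e1, e3, map_add, mul_add]

lemma mulH (a : AW F h) :
    ∃ c : AW F h, a * aeval (aX F h) h = aeval (aX F h) h * c := by
  obtain ⟨w, rfl⟩ := RingQuot.mkAlgHom_surjective F (ahRel F h) a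
  induction w using FreeAlgebra.induction with
  | grade0 r =>
      exact ⟨algebraMap F _ r, by simp [Algebra.commutes]⟩
  | grade1 i =>
      fin_cases i
      · exact ⟨aX F h, aX_comm F h h⟩
      · obtain ⟨q, hq⟩ := yA F h h
        exact ⟨aY F h + aeval (aX F h) q, by
          show aY F h * aeval (aX F h) h = aeval (aX F h) h * (aY F h + aeval (aX F h) q)
          rw [hq, mul_add]⟩
  | mul a b ha hb =>
      obtain ⟨ca, hca⟩ := ha
      obtain ⟨cb, hcb⟩ := hb
      exact ⟨ca * cb, by rw [map_mul, mul_assoc, hcb, ← mul_assoc, hca, mul_assoc]⟩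
  | add a b ha hb =>
      obtain ⟨ca, hca⟩ := ha
      obtain ⟨cb, hcb⟩ := hb
      exact ⟨ca + cb, by rw [map_add, add_mul, hca, hcb, mul_add]⟩

lemma genCommX (b : AW F h) :
    (∃ c, aX F h * b - b * aX F h = aeval (aX F h) h * c) ∧
    (∃ c, aY F h * b - b * aY F h = aeval (aX F h) h * c) := by
  obtain ⟨w, rfl⟩ := RingQuot.mkAlgHom_surjective F (ahRel F h) b
  induction w using FreeAlgebra.induction with
  | grade0 r =>
      exact ⟨⟨0, by simp [Algebra.commutes]⟩, ⟨0, by simp [Algebra.commutes]⟩⟩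
  | grade1 i =>
      fin_cases i
      · constructor
        · refine ⟨0, ?_⟩
          show aX F h * aX F h - aX F h * aX F h = aeval (aX F h) h * 0
          simp
        · refine ⟨1, ?_⟩
          show aY F h * aX F h - aX F h * aY F h = aeval (aX F h) h * 1
          rw [rel, mul_one]; abel
      · constructor
        · refine ⟨-1, ?_⟩
          show aX F h * aY F h - aY F h * aX F h = aeval (aX F h) h * (-1)
          rw [rel]
          noncomm_ring
          rw [mul_smul_comm, mul_one]
        · refine ⟨0, ?_⟩
          show aY F h * aY F h - aY F h * aY F h = aeval (aX F h) h * 0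
          simp
  | mul a b ha hb =>
      obtain ⟨⟨cax, hax⟩, ⟨cay, hay⟩⟩ := ha
      obtain ⟨⟨cbx, hbx⟩, ⟨cby, hby⟩⟩ := hb
      obtain ⟨da, hda⟩ := mulH F h (RingQuot.mkAlgHom F (ahRel F h) a)
      rw [map_mul]
      set A := RingQuot.mkAlgHom F (ahRel F h) a
      set B := RingQuot.mkAlgHom F (ahRel F h) b
      constructor
      · refine ⟨cax * B + da * cbx, ?_⟩
        have : aX F h * (A * B) - A * B * aX F h =
            (aX F h * A - A * aX F h) * B + A * (aX F h * B - B * aX F h) := by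
          simp only [sub_mul, mul_sub, mul_assoc]; abel
        rw [this, hax, hbx, ← mul_assoc, hda, mul_add, mul_assoc, mul_assoc]
      · refine ⟨cay * B + da * cby, ?_⟩
        have : aY F h * (A * B) - A * B * aY F h =
            (aY F h * A - A * aY F h) * B + A * (aY F h * B - B * aY F h) := by
          simp only [sub_mul, mul_sub, mul_assoc]; abel
        rw [this, hay, hby, ← mul_assoc, hda, mul_add, mul_assoc, mul_assoc]
  | add a b ha hb =>
      obtain ⟨⟨cax, hax⟩, ⟨cay, hay⟩⟩ := ha
      obtain ⟨⟨cbx, hbx⟩, ⟨cby, hby⟩⟩ := hb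
      rw [map_add]
      set A := RingQuot.mkAlgHom F (ahRel F h) a
      set B := RingQuot.mkAlgHom F (ahRel F h) b
      refine ⟨⟨cax + cbx, ?_⟩, ⟨cay + cby, ?_⟩⟩
      · have : aX F h * (A + B) - (A + B) * aX F h =
            (aX F h * A - A * aX F h) + (aX F h * B - B * aX F h) := by noncomm_ring
        rw [this, hax, hbx, mul_add]
      · have : aY F h * (A + B) - (A + B) * aY F h =
            (aY F h * A - A * aY F h) + (aY F h * B - B * aY F h) := by noncomm_ring
        rw [this, hay, hby, mul_add]

lemma commutator (a b : AW F h) :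
    ∃ c, a * b - b * a = aeval (aX F h) h * c := by
  obtain ⟨w, rfl⟩ := RingQuot.mkAlgHom_surjective F (ahRel F h) a
  induction w using FreeAlgebra.induction generalizing b with
  | grade0 r =>
      exact ⟨0, by simp [Algebra.commutes]⟩
  | grade1 i =>
      fin_cases i
      · exact (genCommX F h b).1
      · exact (genCommX F h b).2
  | mul a₁ a₂ h₁ h₂ =>
      obtain ⟨c₂, hc₂⟩ := h₂ b
      obtain ⟨c₁, hc₁⟩ := h₁ b
      obtain ⟨d, hd⟩ := mulH F h (RingQuot.mkAlgHom F (ahRel F h) a₁)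
      refine ⟨d * c₂ + c₁ * RingQuot.mkAlgHom F (ahRel F h) a₂, ?_⟩
      rw [map_mul]
      set A := RingQuot.mkAlgHom F (ahRel F h) a₁
      set B := RingQuot.mkAlgHom F (ahRel F h) a₂
      have : A * B * b - b * (A * B) =
          A * (B * b - b * B) + (A * b - b * A) * B := by
        simp only [sub_mul, mul_sub, mul_assoc]; abel
      rw [this, hc₂, hc₁, ← mul_assoc, hd, mul_add, mul_assoc, mul_assoc]
  | add a₁ a₂ h₁ h₂ =>
      obtain ⟨c₁, hc₁⟩ := h₁ b
      obtain ⟨c₂, hc₂⟩ := h₂ b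
      refine ⟨c₁ + c₂, ?_⟩
      rw [map_add]
      set A := RingQuot.mkAlgHom F (ahRel F h) a₁
      set B := RingQuot.mkAlgHom F (ahRel F h) a₂
      have : (A + B) * b - b * (A + B) = (A * b - b * A) + (B * b - b * B) := by noncomm_ring
      rw [this, hc₁, hc₂, mul_add]

end Stmt9Aux

/-- The Lie commutator ideal `[A_h, A_h]` (the `F`-span of all commutators `ab − ba`)
is contained in `h·A_h`. -/
theorem stmt9 (F : Type) [Field F] (h : F[X]) :
    ∀ z ∈ Submodule.span F {z : AW F h | ∃ a b, z = a * b - b * a},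
      ∃ c, z = aeval (aX F h) h * c := by
  intro z hz
  have hle : Submodule.span F {z : AW F h | ∃ a b, z = a * b - b * a} ≤
      LinearMap.range (LinearMap.mulLeft F (aeval (aX F h) h)) := by
    rw [Submodule.span_le]
    rintro w ⟨a, b, rfl⟩
    obtain ⟨c, hc⟩ := Stmt9Aux.commutator F h a b
    exact ⟨c, hc.symm⟩
  obtain ⟨c, hc⟩ := hle hz
  exact ⟨c, hc.symm⟩
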